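/- Let n ∈ ℕ. Then TYPE[n] = { P(ℕ ∖ {n}) ∪ F : F is an ultrafilter on ℕ with {n} ∉ F }, equipped with the subspace topology from 2^{P(ℕ)}, is homeomorphic to the Stone–Čech compactification βℕ of the discrete space ℕ, i.e., to the space of all ultrafilters on ℕ with the Stone topology (whose basic open sets are {F : A ∈ F} for A ⊆ ℕ). -/

import Mathlib

/-!
The map `F ↦ 𝒫(ℕ ∖ {n}) ∪ F` is injective on ultrafilters with `{n} ∉ F`, since `F` is recovered
as `{A | A ∪ {n} ∈ T}`, and it is continuous into the Cantor cube, since for each `A` the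
condition `A ∈ T` is either trivially true (when `n ∉ A`) or equivalent to `A ∈ F`. Precomposing
with the push-forward along a bijection `ℕ ≃ ℕ ∖ {n}` gives a continuous bijection from `βℕ`
onto `TYPE[n]`; as `βℕ` is compact and the Cantor cube is Hausdorff, it is a homeomorphism.
-/

/-- The Cantor-cube topology on `Set (Set X)` (identifying `𝒫(𝒫(X))` with `2^{𝒫(X)}`):
the product topology, whose subbasic open sets are
`A⁺ = {x | A ∈ x}` and `A⁻ = {x | A ∉ x}` for `A ⊆ X`. -/
def cantorTop (X : Type*) : TopologicalSpace (Set (Set X)) :=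
  TopologicalSpace.generateFrom
    ({U | ∃ A : Set X, U = {x : Set (Set X) | A ∈ x}} ∪
     {U | ∃ A : Set X, U = {x : Set (Set X) | A ∉ x}})

/-- `TYPE[n]`: the set of ultratopologies on `ℕ` associated with the point `n`, i.e. the
families of the form `𝒫(ℕ \ {n}) ∪ F` where `F` is an ultrafilter on `ℕ` with `{n} ∉ F`. -/
def TYPEb (n : ℕ) : Set (Set (Set ℕ)) :=
  {T | ∃ F : Ultrafilter ℕ, ({n} : Set ℕ) ∉ F ∧
    T = {A : Set ℕ | A ⊆ ({n} : Set ℕ)ᶜ} ∪ {A : Set ℕ | A ∈ F}}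

open Set Function

local instance (X : Type*) : TopologicalSpace (Set (Set X)) := cantorTop X

section CantorCube

variable {X : Type*}

lemma isOpen_setOf_mem (A : Set X) : IsOpen {x : Set (Set X) | A ∈ x} :=
  TopologicalSpace.GenerateOpen.basic _ (Or.inl ⟨A, rfl⟩)

lemma isOpen_setOf_notMem (A : Set X) : IsOpen {x : Set (Set X) | A ∉ x} :=
  TopologicalSpace.GenerateOpen.basic _ (Or.inr ⟨A, rfl⟩)

instance t2Space_cantorTop : T2Space (Set (Set X)) := by
  refine ⟨fun x y hxy => ?_⟩
  obtain ⟨A, hA⟩ := not_forall.1 (mt Set.ext hxy)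
  by_cases hAx : A ∈ x
  · exact ⟨_, _, isOpen_setOf_mem A, isOpen_setOf_notMem A, hAx,
      fun hAy => hA (iff_of_true hAx hAy), Set.disjoint_left.2 fun _ h h' => h' h⟩
  · exact ⟨_, _, isOpen_setOf_notMem A, isOpen_setOf_mem A, hAx,
      not_not.1 fun hAy => hA (iff_of_false hAx hAy), Set.disjoint_left.2 fun _ h h' => h h'⟩

lemma continuous_cantorTop_iff {Y : Type*} [TopologicalSpace Y] {f : Y → Set (Set X)} :
    Continuous f ↔ ∀ A : Set X, IsOpen {y | A ∈ f y} ∧ IsOpen {y | A ∉ f y} := by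
  refine ⟨fun hf A => ⟨(isOpen_setOf_mem A).preimage hf, (isOpen_setOf_notMem A).preimage hf⟩,
    fun hf => continuous_generateFrom_iff.2 ?_⟩
  rintro _ (⟨A, rfl⟩ | ⟨A, rfl⟩)
  exacts [(hf A).1, (hf A).2]

end CantorCube

namespace Ultrafilter

variable {α β : Type*}

lemma continuous_map (m : α → β) : Continuous (map m) :=
  continuous_generateFrom_iff.2 fun _ ⟨s, hs⟩ => hs ▸ ultrafilter_isOpen_basic (m ⁻¹' s)

lemma map_injective {m : α → β} (hm : Injective m) : Injective (map m) := by
  intro G G' h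
  ext s
  rw [← preimage_image_eq s hm, ← mem_map, ← mem_map, h]

end Ultrafilter

section Ultratopology

variable {X : Type*} (x : X)

def ultratopology (F : Ultrafilter X) : Set (Set X) :=
  {A | A ⊆ {x}ᶜ} ∪ {A | A ∈ F}

def ultratopologiesAt : Set (Set (Set X)) :=
  {T | ∃ F : Ultrafilter X, {x} ∉ F ∧ T = ultratopology x F}

variable {x}

lemma union_singleton_mem_ultratopology_iff {F : Ultrafilter X} (hF : {x} ∉ F) (A : Set X) :
    A ∪ {x} ∈ ultratopology x F ↔ A ∈ F := by
  have hA : ¬ A ∪ {x} ⊆ {x}ᶜ := fun h => h (Or.inr rfl) rfl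
  simp only [ultratopology, mem_union, mem_ofPred_eq, hA, false_or, Ultrafilter.union_mem_iff, hF,
    or_false]

lemma ultratopology_injOn : InjOn (ultratopology x) {F | {x} ∉ F} := by
  intro F hF G hG h
  ext A
  rw [← union_singleton_mem_ultratopology_iff hF, ← union_singleton_mem_ultratopology_iff hG, h]

variable (x) in
lemma continuous_ultratopology : Continuous (ultratopology x) := by
  refine continuous_cantorTop_iff.2 fun A => ?_
  by_cases hA : A ⊆ {x}ᶜ
  · simp only [ultratopology, mem_union, mem_ofPred_eq, hA, true_or, not_true, ofPred_true,
      ofPred_false]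
    exact ⟨isOpen_univ, isOpen_empty⟩
  · simp only [ultratopology, mem_union, mem_ofPred_eq, hA, false_or]
    exact ⟨ultrafilter_isOpen_basic A, (ultrafilter_isClosed_basic A).isOpen_compl⟩

variable {Y : Type*} {e : Y → X}

lemma singleton_notMem_map (hx : x ∉ range e) (G : Ultrafilter Y) : {x} ∉ G.map e := by
  rw [Ultrafilter.mem_map, preimage_singleton_eq_empty.2 hx]
  exact Ultrafilter.empty_notMem

lemma exists_map_eq_of_singleton_notMem (hrange : range e = {x}ᶜ) {F : Ultrafilter X}
    (hF : {x} ∉ F) : ∃ G : Ultrafilter Y, G.map e = F := by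
  have hlarge : e '' univ ∈ F := by
    rwa [image_univ, hrange, Ultrafilter.compl_mem_iff_notMem]
  exact ⟨_, Ultrafilter.ofComapInfPrincipal_eq_of_map hlarge⟩

def ultratopologyMap (hrange : range e = {x}ᶜ) (G : Ultrafilter Y) : ultratopologiesAt x :=
  ⟨ultratopology x (G.map e), G.map e, singleton_notMem_map (by simp [hrange]) G, rfl⟩

lemma bijective_ultratopologyMap (he : Injective e) (hrange : range e = {x}ᶜ) :
    Bijective (ultratopologyMap hrange) := by
  have hx : x ∉ range e := by simp [hrange]
  refine ⟨fun G G' h => Ultrafilter.map_injective he ?_, ?_⟩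
  · exact ultratopology_injOn (singleton_notMem_map hx G) (singleton_notMem_map hx G')
      (congrArg Subtype.val h)
  · rintro ⟨_, F, hF, rfl⟩
    obtain ⟨G, rfl⟩ := exists_map_eq_of_singleton_notMem hrange hF
    exact ⟨G, rfl⟩

lemma continuous_ultratopologyMap (hrange : range e = {x}ᶜ) :
    Continuous (ultratopologyMap hrange) :=
  ((continuous_ultratopology x).comp (Ultrafilter.continuous_map e)).subtype_mk _

noncomputable def ultratopologiesAtHomeomorph (he : Injective e) (hrange : range e = {x}ᶜ) :
    Ultrafilter Y ≃ₜ ultratopologiesAt x :=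
  Continuous.homeoOfEquivCompactToT2
    (f := Equiv.ofBijective _ (bijective_ultratopologyMap he hrange))
    (continuous_ultratopologyMap hrange)

end Ultratopology

def Nat.skip (n k : ℕ) : ℕ := if k < n then k else k + 1

lemma Nat.skip_injective (n : ℕ) : Injective (Nat.skip n) := by
  intro a b h
  unfold Nat.skip at h
  split_ifs at h <;> omega

lemma Nat.range_skip (n : ℕ) : range (Nat.skip n) = {n}ᶜ := by
  ext m
  simp only [mem_range, mem_compl_iff, mem_singleton_iff, Nat.skip]
  refine ⟨by rintro ⟨k, rfl⟩; split_ifs <;> omega, fun h => ?_⟩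
  rcases Nat.lt_or_ge m n with hmn | hmn
  · exact ⟨m, if_pos hmn⟩
  · exact ⟨m - 1, by split_ifs <;> omega⟩

/-- `TYPE[n]` with the subspace topology from `2^{𝒫(ℕ)}` is homeomorphic to `βℕ`,
the space of all ultrafilters on `ℕ` with the Stone topology. -/
theorem stmt17 (n : ℕ) :
    Nonempty (@Homeomorph (↥(TYPEb n)) (Ultrafilter ℕ)
      (TopologicalSpace.induced Subtype.val (cantorTop ℕ))
      Ultrafilter.topologicalSpace) :=
  ⟨(ultratopologiesAtHomeomorph (Nat.skip_injective n) (Nat.range_skip n)).symm⟩
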